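/- arXiv:1502.02619 — 3 statements merged into one kernel-verified Lean document; each statement's English description precedes it below -/
import Mathlib

section
/- For all integers x and y, |x-y|^(2|x-y|) ≤ (2|x|)^(2|x|) · (2|y|)^(2|y|), with equality if and only if x = -y. (Here 0^0 is interpreted as 1.) -/
/-! Set `a = |x|`, `b = |y|`. Since `|x - y| ≤ a + b` and `n ↦ n ^ n` is monotone, it suffices
to show `(a + b) ^ (a + b) ≤ (2a) ^ a (2b) ^ b`; after taking logarithms this is midpoint
convexity of `t ↦ t log t`, strict when `a ≠ b`. When `a = b` but `x ≠ -y`, the left side is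
`0 ^ 0 = 1`. Doubling the exponents only squares both sides. -/

open Real in
theorem Real.add_mul_log_add_lt {a b : ℝ} (ha : 0 < a) (hb : 0 < b) (hab : a ≠ b) :
    (a + b) * log (a + b) < a * log (2 * a) + b * log (2 * b) := by
  have hmid := strictConvexOn_mul_log.2 (Set.mem_Ici.2 ha.le) (Set.mem_Ici.2 hb.le) hab
    (by norm_num : (0 : ℝ) < 1 / 2) (by norm_num : (0 : ℝ) < 1 / 2) (by norm_num)
  simp only [smul_eq_mul] at hmid
  rw [show 1 / 2 * a + 1 / 2 * b = (a + b) / 2 by ring,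
    log_div (by positivity) two_ne_zero] at hmid
  rw [log_mul two_ne_zero ha.ne', log_mul two_ne_zero hb.ne']
  linarith

theorem Nat.add_pow_self_lt {a b : ℕ} (hab : a ≠ b) :
    (a + b) ^ (a + b) < (2 * a) ^ a * (2 * b) ^ b := by
  obtain rfl | ha := Nat.eq_zero_or_pos a
  · simpa using Nat.pow_lt_pow_left (by omega : b < 2 * b) (Ne.symm hab)
  obtain rfl | hb := Nat.eq_zero_or_pos b
  · simpa using Nat.pow_lt_pow_left (by omega : a < 2 * a) hab
  have key := Real.add_mul_log_add_lt (a := a) (b := b) (by positivity) (by positivity)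
    (by exact_mod_cast hab)
  rw [← Nat.cast_add, ← Real.log_pow, ← Real.log_pow, ← Real.log_pow,
    ← Real.log_mul (by positivity) (by positivity),
    Real.log_lt_log_iff (by positivity) (by positivity)] at key
  exact_mod_cast key

theorem Nat.add_pow_self_le (a b : ℕ) : (a + b) ^ (a + b) ≤ (2 * a) ^ a * (2 * b) ^ b := by
  obtain rfl | hab := eq_or_ne a b
  · rw [two_mul, pow_add]
  · exact (Nat.add_pow_self_lt hab).le

theorem Int.natAbs_sub_pow_self_le (x y : ℤ) :
    (x - y).natAbs ^ (x - y).natAbs ≤ (2 * x.natAbs) ^ x.natAbs * (2 * y.natAbs) ^ y.natAbs :=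
  (Nat.pow_self_mono (Int.natAbs_sub_le x y)).trans (Nat.add_pow_self_le _ _)

theorem Int.natAbs_sub_pow_self_lt {x y : ℤ} (h : x ≠ -y) :
    (x - y).natAbs ^ (x - y).natAbs < (2 * x.natAbs) ^ x.natAbs * (2 * y.natAbs) ^ y.natAbs := by
  obtain hab | hab := eq_or_ne x.natAbs y.natAbs
  · obtain rfl := (Int.natAbs_eq_natAbs_iff.1 hab).resolve_right h
    have hx : x.natAbs ≠ 0 := by
      rintro hx
      exact h (by simp [Int.natAbs_eq_zero.1 hx])
    rw [sub_self, Int.natAbs_zero, pow_zero, ← pow_add, ← two_mul]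
    exact Nat.one_lt_pow (by omega) (by omega)
  · exact (Nat.pow_self_mono (Int.natAbs_sub_le x y)).trans_lt (Nat.add_pow_self_lt hab)

theorem Int.natAbs_neg_sub_pow_self (y : ℤ) :
    (-y - y).natAbs ^ (-y - y).natAbs =
      (2 * (-y).natAbs) ^ (-y).natAbs * (2 * y.natAbs) ^ y.natAbs := by
  rw [Int.natAbs_neg, ← pow_add, ← two_mul, show -y - y = -(2 * y) by ring,
    Int.natAbs_neg, Int.natAbs_mul]
  rfl

theorem stmt0 (x y : ℤ) :
    (x - y).natAbs ^ (2 * (x - y).natAbs) ≤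
      (2 * x.natAbs) ^ (2 * x.natAbs) * (2 * y.natAbs) ^ (2 * y.natAbs) ∧
    ((x - y).natAbs ^ (2 * (x - y).natAbs) =
      (2 * x.natAbs) ^ (2 * x.natAbs) * (2 * y.natAbs) ^ (2 * y.natAbs) ↔ x = -y) := by
  simp only [pow_mul', ← mul_pow, Nat.pow_le_pow_iff_left two_ne_zero,
    Nat.pow_left_inj two_ne_zero]
  refine ⟨Int.natAbs_sub_pow_self_le x y, fun heq => ?_, ?_⟩
  · by_contra h
    exact (Int.natAbs_sub_pow_self_lt h).ne heq
  · rintro rfl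
    exact Int.natAbs_neg_sub_pow_self y
end

section
/- In the group G = ⟨a,b,t | [a,b]=1, t⁻¹at = b⟩, let H be the subgroup generated by a⁻¹b and t. Define α₀ = 1 and αₙ = t·(a⁻¹b)ⁿ·αₙ₋₁ for n ≥ 1, and define βₙ = aⁿ·(t·a⁻¹)ⁿ. Then αₙ = βₙ for all n ≥ 0. -/
/-- Relators for `G = ⟨a,b,t ∣ [a,b] = 1, t⁻¹at = b⟩` (generators `0 ↦ a`, `1 ↦ b`, `2 ↦ t`). -/
def bksRels : Set (FreeGroup (Fin 3)) :=
  { FreeGroup.of 0 * FreeGroup.of 1 * (FreeGroup.of 0)⁻¹ * (FreeGroup.of 1)⁻¹,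
    (FreeGroup.of 2)⁻¹ * FreeGroup.of 0 * FreeGroup.of 2 * (FreeGroup.of 1)⁻¹ }

/-- The Burns–Karrass–Solitar tubular group. -/
abbrev BKS := PresentedGroup bksRels

def bksA : BKS := PresentedGroup.of 0
def bksB : BKS := PresentedGroup.of 1
def bksT : BKS := PresentedGroup.of 2

/-- `αₙ`, defined by `α₀ = 1` and `αₙ = t (a⁻¹b)ⁿ αₙ₋₁`. -/
def bksAlpha : ℕ → BKS
  | 0 => 1
  | n + 1 => bksT * (bksA⁻¹ * bksB) ^ (n + 1) * bksAlpha n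

/- Since `a` and `b` commute, `(a⁻¹b)ⁿ⁺¹ aⁿ = bⁿ⁺¹ a⁻¹`, and conjugation by `t` turns `bⁿ⁺¹` into
`aⁿ⁺¹`, so `t (a⁻¹b)ⁿ⁺¹ aⁿ = aⁿ⁺¹ (t a⁻¹)`: each step of the recursion for `αₙ` raises the power of
`a` on the left and of `t a⁻¹` on the right by one. -/

theorem mul_inv_mul_pow_succ_mul_pow {G : Type*} [Group G] {a b t : G} (hab : Commute a b)
    (htba : SemiconjBy t b a) (n : ℕ) :
    t * (a⁻¹ * b) ^ (n + 1) * a ^ n = a ^ (n + 1) * (t * a⁻¹) := by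
  have hpow : (a⁻¹ * b) ^ (n + 1) * a ^ n = b ^ (n + 1) * a⁻¹ := by
    rw [hab.inv_left.mul_pow, (hab.inv_left.pow_pow (n + 1) (n + 1)).eq, mul_assoc]
    group
  rw [mul_assoc, hpow, ← mul_assoc, (htba.pow_right (n + 1)).eq, mul_assoc]

theorem bksA_commute_bksB : Commute bksA bksB :=
  PresentedGroup.mk_eq_mk_of_mul_inv_mem (rels := bksRels) (x := FreeGroup.of 0 * FreeGroup.of 1)
    (y := FreeGroup.of 1 * FreeGroup.of 0) (by simp [bksRels, mul_assoc])

theorem semiconjBy_bksT : SemiconjBy bksT bksB bksA := by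
  have h : bksT⁻¹ * bksA * bksT = bksB :=
    PresentedGroup.mk_eq_mk_of_mul_inv_mem (rels := bksRels)
      (x := (FreeGroup.of 2)⁻¹ * FreeGroup.of 0 * FreeGroup.of 2) (y := FreeGroup.of 1)
      (by simp [bksRels])
  rw [SemiconjBy, ← h]
  group

theorem stmt6 (n : ℕ) : bksAlpha n = bksA ^ n * (bksT * bksA⁻¹) ^ n := by
  induction n with
  | zero => rfl
  | succ n ih =>
    rw [bksAlpha, ih, ← mul_assoc,
      mul_inv_mul_pow_succ_mul_pow bksA_commute_bksB semiconjBy_bksT, mul_assoc, ← pow_succ']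
end

section
/- Let n ≥ 1 and let (x₁,y₁),…,(xₙ,yₙ) be nonzero integer pairs (each (xᵢ,yᵢ) ≠ (0,0)) satisfying 2·Σ|xᵢ| = 2·Σ|yᵢ| = Σ|xᵢ−yᵢ|, and suppose (x₁,y₁) is not of the form (k,−k). Then ∏_{i=1}^n |xᵢ−yᵢ|^{2|xᵢ−yᵢ|} / ((2|xᵢ|)^{2|xᵢ|}·(2|yᵢ|)^{2|yᵢ|}) < 1, where 0⁰ = 1. -/
/-!
Write `a = |x|`, `b = |y|`, `d = |x - y| ≤ a + b`. As `m ↦ m ^ (2m)` is monotone on `ℕ`,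
`d ^ (2d) ≤ (a + b) ^ (2(a + b))`, and strict midpoint convexity of `t ↦ t log t` at `2a` and `2b`
gives `(a + b) ^ (2(a + b)) ≤ (2a) ^ (2a) (2b) ^ (2b)`, strictly unless `a = b`. So every factor
is at most `1`, and it equals `1` only if `a = b` and `d = a + b`, that is `y = -x`.
-/

open Real

namespace Nat

theorem pow_two_mul_self_pos (m : ℕ) : 0 < m ^ (2 * m) :=
  Nat.pow_pos_iff.2 (by omega)

theorem pow_two_mul_self_le_of_le {d s : ℕ} (h : d ≤ s) : d ^ (2 * d) ≤ s ^ (2 * s) := by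
  rcases Nat.eq_zero_or_pos d with rfl | hd
  · exact pow_two_mul_self_pos s
  · calc d ^ (2 * d) ≤ s ^ (2 * d) := Nat.pow_le_pow_left h _
      _ ≤ s ^ (2 * s) := Nat.pow_le_pow_right (by omega) (by omega)

theorem pow_two_mul_self_lt_of_lt {d s : ℕ} (h : d < s) (hs : 2 ≤ s) :
    d ^ (2 * d) < s ^ (2 * s) := by
  rcases Nat.eq_zero_or_pos d with rfl | hd
  · exact Nat.one_lt_pow (by omega) (by omega)
  · calc d ^ (2 * d) < s ^ (2 * d) := Nat.pow_lt_pow_left h (by omega)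
      _ ≤ s ^ (2 * s) := Nat.pow_le_pow_right (by omega) (by omega)

theorem add_pow_two_mul_lt_of_ne {a b : ℕ} (hab : a ≠ b) :
    (a + b) ^ (2 * (a + b)) < (2 * a) ^ (2 * a) * (2 * b) ^ (2 * b) := by
  have hconv := strictConvexOn_mul_log.2 (Set.mem_Ici.2 (by positivity : (0 : ℝ) ≤ 2 * a))
    (Set.mem_Ici.2 (by positivity : (0 : ℝ) ≤ 2 * b)) (by exact_mod_cast (by omega : 2 * a ≠ 2 * b))
    (by norm_num : (0 : ℝ) < 1 / 2) (by norm_num : (0 : ℝ) < 1 / 2) (by norm_num)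
  have hmid : (1 / 2 : ℝ) • (2 * a : ℝ) + (1 / 2 : ℝ) • (2 * b : ℝ) = a + b := by
    simp only [smul_eq_mul]; ring
  rw [hmid, smul_eq_mul, smul_eq_mul] at hconv
  have hs : 0 < (a + b) ^ (2 * (a + b)) := pow_two_mul_self_pos _
  have ha : 0 < (2 * a) ^ (2 * a) := Nat.pow_self_pos
  have hb : 0 < (2 * b) ^ (2 * b) := Nat.pow_self_pos
  rw [← Nat.cast_lt (α := ℝ), ← Real.log_lt_log_iff (by exact_mod_cast hs)
    (by exact_mod_cast Nat.mul_pos ha hb)]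
  push_cast
  rw [Real.log_mul (by exact_mod_cast ha.ne') (by exact_mod_cast hb.ne'), Real.log_pow,
    Real.log_pow, Real.log_pow]
  push_cast
  linarith

theorem add_pow_two_mul_le (a b : ℕ) :
    (a + b) ^ (2 * (a + b)) ≤ (2 * a) ^ (2 * a) * (2 * b) ^ (2 * b) := by
  rcases eq_or_ne a b with rfl | hab
  · rw [← pow_add]; ring_nf; rfl
  · exact (add_pow_two_mul_lt_of_ne hab).le

end Nat

namespace Int

theorem natAbs_sub_pow_two_mul_le (x y : ℤ) :
    (x - y).natAbs ^ (2 * (x - y).natAbs) ≤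
      (2 * x.natAbs) ^ (2 * x.natAbs) * (2 * y.natAbs) ^ (2 * y.natAbs) :=
  (Nat.pow_two_mul_self_le_of_le (natAbs_sub_le x y)).trans (Nat.add_pow_two_mul_le _ _)

theorem natAbs_sub_pow_two_mul_lt {x y : ℤ} (h : y ≠ -x) :
    (x - y).natAbs ^ (2 * (x - y).natAbs) <
      (2 * x.natAbs) ^ (2 * x.natAbs) * (2 * y.natAbs) ^ (2 * y.natAbs) := by
  by_cases hab : x.natAbs = y.natAbs
  · obtain rfl : x = y := by
      rcases natAbs_eq_natAbs_iff.1 hab with h' | h'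
      · exact h'
      · exact absurd (by rw [h', neg_neg]) h
    have hx : x ≠ 0 := by rintro rfl; exact h rfl
    rw [sub_self, natAbs_zero, ← pow_add, ← two_mul]
    exact Nat.pow_two_mul_self_lt_of_lt (by omega) (by omega)
  · exact (Nat.pow_two_mul_self_le_of_le (natAbs_sub_le x y)).trans_lt
      (Nat.add_pow_two_mul_lt_of_ne hab)

end Int

def dilationFactor (x y : ℤ) : ℚ :=
  ((x - y).natAbs ^ (2 * (x - y).natAbs) : ℚ) /
    (((2 * x.natAbs) ^ (2 * x.natAbs) : ℚ) * ((2 * y.natAbs) ^ (2 * y.natAbs) : ℚ))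

theorem dilationFactor_eq (x y : ℤ) :
    dilationFactor x y = ((x - y).natAbs ^ (2 * (x - y).natAbs) : ℕ) /
      ((2 * x.natAbs) ^ (2 * x.natAbs) * (2 * y.natAbs) ^ (2 * y.natAbs) : ℕ) := by
  rw [dilationFactor]; push_cast; rfl

theorem dilationFactor_denom_pos (x y : ℤ) :
    (0 : ℚ) < ((2 * x.natAbs) ^ (2 * x.natAbs) * (2 * y.natAbs) ^ (2 * y.natAbs) : ℕ) := by
  exact_mod_cast Nat.mul_pos Nat.pow_self_pos Nat.pow_self_pos

theorem dilationFactor_pos (x y : ℤ) : 0 < dilationFactor x y := by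
  rw [dilationFactor_eq]
  exact div_pos (by exact_mod_cast Nat.pow_two_mul_self_pos _) (dilationFactor_denom_pos x y)

theorem dilationFactor_le_one (x y : ℤ) : dilationFactor x y ≤ 1 := by
  rw [dilationFactor_eq, div_le_one (dilationFactor_denom_pos x y)]
  exact_mod_cast Int.natAbs_sub_pow_two_mul_le x y

theorem dilationFactor_lt_one {x y : ℤ} (h : y ≠ -x) : dilationFactor x y < 1 := by
  rw [dilationFactor_eq, div_lt_one (dilationFactor_denom_pos x y)]
  exact_mod_cast Int.natAbs_sub_pow_two_mul_lt h

theorem stmt11_general (n : ℕ) (hn : 0 < n) (x y : Fin n → ℤ)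
    (hfirst : ¬ ∃ k : ℤ, x ⟨0, hn⟩ = k ∧ y ⟨0, hn⟩ = -k) :
    ∏ i, (((x i - y i).natAbs ^ (2 * (x i - y i).natAbs) : ℚ) /
      (((2 * (x i).natAbs) ^ (2 * (x i).natAbs) : ℚ) *
        ((2 * (y i).natAbs) ^ (2 * (y i).natAbs) : ℚ))) < 1 := by
  have hy₀ : y ⟨0, hn⟩ ≠ -x ⟨0, hn⟩ := fun h => hfirst ⟨_, rfl, h⟩
  calc ∏ i, dilationFactor (x i) (y i)
      < ∏ _i : Fin n, (1 : ℚ) :=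
        Finset.prod_lt_prod (fun _ _ => dilationFactor_pos _ _)
          (fun _ _ => dilationFactor_le_one _ _)
          ⟨⟨0, hn⟩, Finset.mem_univ _, dilationFactor_lt_one hy₀⟩
    _ = 1 := Finset.prod_const_one

theorem stmt11 (n : ℕ) (hn : 0 < n) (x y : Fin n → ℤ)
    (hnz : ∀ i, (x i, y i) ≠ (0, 0))
    (h1 : 2 * ∑ i, |x i| = ∑ i, |x i - y i|)
    (h2 : 2 * ∑ i, |y i| = ∑ i, |x i - y i|)
    (hfirst : ¬ ∃ k : ℤ, x ⟨0, hn⟩ = k ∧ y ⟨0, hn⟩ = -k) :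
    ∏ i, (((x i - y i).natAbs ^ (2 * (x i - y i).natAbs) : ℚ) /
      (((2 * (x i).natAbs) ^ (2 * (x i).natAbs) : ℚ) *
        ((2 * (y i).natAbs) ^ (2 * (y i).natAbs) : ℚ))) < 1 :=
  stmt11_general n hn x y hfirst
end
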